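/- Let W_FE ∈ ℝ^M be a vector with strictly positive entries (the finite element weights). Let A ∈ ℝ^{M×N} admit the decomposition A = U S Vᵀ + E with U ∈ ℝ^{M×p}, where the truncation term factors as E = U⊥ S⊥ V⊥ᵀ with U⊥ᵀ · diag(W_FE) · U = 0, and suppose the column space of U contains the all-ones vector. Let W* ∈ ℝ^M be any vector of cubature weights satisfying Uᵀ W* = Uᵀ W_FE (exact integration of all basis functions). Then Aᵀ W* − Aᵀ W_FE = Eᵀ W*, and consequently the integration error of the cubature rule satisfies e_decm := ‖Aᵀ W* − Aᵀ W_FE‖₂ = ‖Eᵀ W*‖₂. -/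
import Mathlib


open Matrix

/-- The DECM integration error: if the cubature weights `Wstar` exactly integrate
all basis functions, then `Aᵀ Wstar − Aᵀ WFE = Eᵀ Wstar`, and hence the
integration error equals `‖Eᵀ Wstar‖₂`. -/
theorem decm_integration_error {M N p q : ℕ}
    (WFE : Fin M → ℝ) (hW : ∀ i, 0 < WFE i)
    (A E : Matrix (Fin M) (Fin N) ℝ)
    (U : Matrix (Fin M) (Fin p) ℝ) (S : Matrix (Fin p) (Fin p) ℝ)
    (V : Matrix (Fin N) (Fin p) ℝ)
    (Uperp : Matrix (Fin M) (Fin q) ℝ) (Sperp : Matrix (Fin q) (Fin q) ℝ)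
    (Vperp : Matrix (Fin N) (Fin q) ℝ)
    (hA : A = U * S * Vᵀ + E)
    (hE : E = Uperp * Sperp * Vperpᵀ)
    (horth : Uperpᵀ * Matrix.diagonal WFE * U = 0)
    (hone : ∃ c : Fin p → ℝ, U.mulVec c = fun _ => (1 : ℝ))
    (Wstar : Fin M → ℝ)
    (hint : Uᵀ.mulVec Wstar = Uᵀ.mulVec WFE) :
    Aᵀ.mulVec Wstar - Aᵀ.mulVec WFE = Eᵀ.mulVec Wstar ∧
      ‖(WithLp.equiv 2 (Fin N → ℝ)).symm (Aᵀ.mulVec Wstar - Aᵀ.mulVec WFE)‖ =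
        ‖(WithLp.equiv 2 (Fin N → ℝ)).symm (Eᵀ.mulVec Wstar)‖ := by
  obtain ⟨c, hc⟩ := hone
  have hperpWFE : Uperpᵀ.mulVec WFE = 0 := by
    have h0 : (Uperpᵀ * Matrix.diagonal WFE * U).mulVec c = 0 := by
      rw [horth]; simp
    rw [← Matrix.mulVec_mulVec, ← Matrix.mulVec_mulVec, hc] at h0
    have hdw : (Matrix.diagonal WFE).mulVec (fun _ => (1:ℝ)) = WFE := by
      ext i; simp [Matrix.mulVec_diagonal]
    rwa [hdw] at h0
  have hEWFE : Eᵀ.mulVec WFE = 0 := by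
    rw [hE]
    simp only [Matrix.transpose_mul, Matrix.transpose_transpose]
    rw [← Matrix.mulVec_mulVec, ← Matrix.mulVec_mulVec, hperpWFE]
    simp
  have key : Aᵀ.mulVec Wstar - Aᵀ.mulVec WFE = Eᵀ.mulVec Wstar := by
    rw [hA]
    simp only [Matrix.transpose_add, Matrix.transpose_mul, Matrix.transpose_transpose,
      Matrix.add_mulVec]
    rw [← Matrix.mulVec_mulVec, ← Matrix.mulVec_mulVec, ← Matrix.mulVec_mulVec,
      ← Matrix.mulVec_mulVec, hint, hEWFE]
    abel
  exact ⟨key, by rw [key]⟩
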